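/- For the trace [(a³bc²)ⁿ] in the trace monoid over E = {a,b,c} with independence relation I = {(a,c),(c,a)}, the Foata normal form is [a][a][a]([b][ac][ac][a])^{n-1}[b][c][c], and its height is 4n + 2. -/

import Mathlib

/-!
Since `a` and `c` commute, `acac ≡ ccaa`; hence each period `[b][ac][ac][a]` flattens to
`b·acac·a ≡ bcc·aaa`, and the flattened factorization is rewritten into `(a³bc²)ⁿ` one period
at a time. The Foata conditions only involve single steps
and adjacent pairs of steps, and the factorization is periodic, so they reduce to finitely many
checks.
-/

/-- One elementary transposition of adjacent independent letters. -/
def TraceStep {E : Type} (I : E → E → Prop) (w₁ w₂ : List E) : Prop :=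
  ∃ u v a b, I a b ∧ w₁ = u ++ a :: b :: v ∧ w₂ = u ++ b :: a :: v

/-- Trace equivalence: the equivalence relation generated by transposing
adjacent independent letters. -/
def TraceEquiv {E : Type} (I : E → E → Prop) : List E → List E → Prop :=
  Relation.EqvGen (TraceStep I)

/-- A step: a nonempty word of pairwise independent distinct letters written in
increasing order. -/
def IsStep {E : Type} [LT E] (I : E → E → Prop) (c : List E) : Prop :=
  c ≠ [] ∧ c.Pairwise (· < ·) ∧ c.Pairwise I

/-- The Foata conditions for a factorization into steps. -/
def IsFoata {E : Type} [LT E] (I : E → E → Prop) (L : List (List E)) : Prop :=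
  (∀ c ∈ L, IsStep I c) ∧
  L.Chain' (fun c₁ c₂ => ∀ a ∈ c₂, ∃ b ∈ c₁, ¬ I a b)

/-- A parallel process: a factorization into nonempty blocks of pairwise
independent letters. -/
def IsParProc {E : Type} (I : E → E → Prop) (M : List (List E)) : Prop :=
  ∀ c ∈ M, c ≠ [] ∧ c.Pairwise I

/-- Replace each letter `e` of a word by `τ e` copies of the corresponding
unit-time small instruction. -/
def expandWord {E : Type} (τ : E → ℕ) (w : List E) : List E :=
  (w.map fun e => List.replicate (τ e) e).flatten

/-- The independence relation on `{a,b,c}` (encoded as `Fin 3` with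
`a = 0 < b = 1 < c = 2`): exactly `a` and `c` are independent. -/
def Ipipe : Fin 3 → Fin 3 → Prop :=
  fun x y => (x = 0 ∧ y = 2) ∨ (x = 2 ∧ y = 0)

/-- The word `(a³bc²)ⁿ`. -/
def pipeWord (n : ℕ) : List (Fin 3) :=
  (List.replicate n ([0, 0, 0, 1, 2, 2] : List (Fin 3))).flatten

/-- The claimed Foata normal form `[a][a][a]([b][ac][ac][a])^{n-1}[b][c][c]`. -/
def pipeFoata (n : ℕ) : List (List (Fin 3)) :=
  [[0], [0], [0]] ++
    (List.replicate (n - 1) ([[1], [0, 2], [0, 2], [0]] : List (List (Fin 3)))).flatten ++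
    [[1], [2], [2]]

section TraceEquiv

variable {E : Type} {I : E → E → Prop}

theorem TraceStep.append_left {u v : List E} (x : List E) (h : TraceStep I u v) :
    TraceStep I (x ++ u) (x ++ v) := by
  obtain ⟨p, q, a, b, hab, rfl, rfl⟩ := h
  exact ⟨x ++ p, q, a, b, hab, by simp, by simp⟩

theorem TraceStep.append_right {u v : List E} (x : List E) (h : TraceStep I u v) :
    TraceStep I (u ++ x) (v ++ x) := by
  obtain ⟨p, q, a, b, hab, rfl, rfl⟩ := h
  exact ⟨p, q ++ x, a, b, hab, by simp, by simp⟩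

theorem TraceEquiv.map {f : List E → List E}
    (hf : ∀ u v, TraceStep I u v → TraceStep I (f u) (f v)) {u v : List E}
    (h : TraceEquiv I u v) : TraceEquiv I (f u) (f v) := by
  induction h with
  | rel _ _ h => exact .rel _ _ (hf _ _ h)
  | refl => exact .refl _
  | symm _ _ _ ih => exact ih.symm
  | trans _ _ _ _ _ ih₁ ih₂ => exact ih₁.trans _ _ _ ih₂

theorem TraceEquiv.append_left {u v : List E} (x : List E) (h : TraceEquiv I u v) :
    TraceEquiv I (x ++ u) (x ++ v) :=
  h.map fun _ _ => TraceStep.append_left x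

theorem TraceEquiv.append_right {u v : List E} (x : List E) (h : TraceEquiv I u v) :
    TraceEquiv I (u ++ x) (v ++ x) :=
  h.map fun _ _ => TraceStep.append_right x

theorem TraceEquiv.swap {a b : E} (hab : I a b) (u v : List E) :
    TraceEquiv I (u ++ a :: b :: v) (u ++ b :: a :: v) :=
  .rel _ _ ⟨u, v, a, b, hab, rfl, rfl⟩

theorem TraceEquiv.abab_bbaa {a b : E} (hab : I a b) :
    TraceEquiv I [a, b, a, b] [b, b, a, a] :=
  ((TraceEquiv.swap hab [] [a, b]).trans _ _ _ (TraceEquiv.swap hab [b, a] [])).trans _ _ _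
    (TraceEquiv.swap hab [b] [a])

end TraceEquiv

instance : DecidableRel Ipipe := fun x y => by
  unfold Ipipe
  infer_instance

def pipeTail (m : ℕ) : List (List (Fin 3)) :=
  [0] :: ((List.replicate m ([[1], [0, 2], [0, 2], [0]] : List (List (Fin 3)))).flatten ++
    [[1], [2], [2]])

theorem pipeFoata_succ (m : ℕ) : pipeFoata (m + 1) = [0] :: [0] :: pipeTail m := by
  simp [pipeFoata, pipeTail]

theorem pipeTail_succ (m : ℕ) :
    pipeTail (m + 1) = [0] :: [1] :: [0, 2] :: [0, 2] :: pipeTail m := by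
  simp [pipeTail, List.replicate_succ]

theorem pipeWord_succ (m : ℕ) : pipeWord (m + 1) = [0, 0, 0, 1, 2, 2] ++ pipeWord m := by
  simp [pipeWord, List.replicate_succ]

theorem pipeTail_subset (m : ℕ) : pipeTail m ⊆ [[0], [1], [2], [0, 2]] := by
  induction m with
  | zero => decide
  | succ m ih =>
    rw [pipeTail_succ]
    simp only [List.cons_subset]
    exact ⟨by decide, by decide, by decide, by decide, ih⟩

theorem isStep_of_mem {c : List (Fin 3)}
    (hc : c ∈ ([[0], [1], [2], [0, 2]] : List (List (Fin 3)))) : IsStep Ipipe c := by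
  unfold IsStep
  revert c
  decide

theorem isChain_pipeTail (m : ℕ) :
    (pipeTail m).IsChain (fun c₁ c₂ => ∀ a ∈ c₂, ∃ b ∈ c₁, ¬ Ipipe a b) := by
  induction m with
  | zero => decide
  | succ m ih =>
    rw [pipeTail_succ]
    exact .cons_cons (by decide) (.cons_cons (by decide) (.cons_cons (by decide)
      (.cons_cons (by decide) ih)))

theorem isFoata_pipeFoata_succ (m : ℕ) : IsFoata Ipipe (pipeFoata (m + 1)) := by
  rw [pipeFoata_succ]
  have hsteps : [0] :: [0] :: pipeTail m ⊆ [[0], [1], [2], [0, 2]] := by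
    simp only [List.cons_subset]
    exact ⟨by decide, by decide, pipeTail_subset m⟩
  exact ⟨fun _ hc => isStep_of_mem (hsteps hc),
    .cons_cons (by decide) (.cons_cons (by decide) (isChain_pipeTail m))⟩

theorem traceEquiv_flatten_pipeFoata_succ (m : ℕ) :
    TraceEquiv Ipipe (pipeFoata (m + 1)).flatten (pipeWord (m + 1)) := by
  induction m with
  | zero => exact .refl _
  | succ m ih =>
    have hperiod : TraceEquiv Ipipe (pipeFoata (m + 1 + 1)).flatten
        ([0, 0, 0, 1, 2, 2] ++ (pipeFoata (m + 1)).flatten) := by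
      have hac : Ipipe 0 2 := by decide
      have hswap := ((TraceEquiv.abab_bbaa hac).append_right
        (pipeTail m).flatten).append_left [0, 0, 0, 1]
      simpa only [pipeFoata_succ, pipeTail_succ, List.flatten_cons, List.cons_append,
        List.nil_append] using hswap
    rw [pipeWord_succ]
    exact hperiod.trans _ _ _ (ih.append_left _)

theorem length_pipeFoata {n : ℕ} (hn : 1 ≤ n) : (pipeFoata n).length = 4 * n + 2 := by
  simp only [pipeFoata, List.length_append, List.length_flatten, List.map_replicate,
    List.sum_replicate, smul_eq_mul, List.length_cons, List.length_nil]
  omega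

/-- for `n ≥ 1`, the Foata normal form of the trace `[(a³bc²)ⁿ]`
is `[a][a][a]([b][ac][ac][a])^{n-1}[b][c][c]`, of height `4n + 2`. -/
theorem pipeline_foata_normal_form (n : ℕ) (hn : 1 ≤ n) :
    IsFoata Ipipe (pipeFoata n) ∧
    TraceEquiv Ipipe (pipeFoata n).flatten (pipeWord n) ∧
    (pipeFoata n).length = 4 * n + 2 := by
  obtain ⟨m, rfl⟩ : ∃ m, n = m + 1 := ⟨n - 1, by omega⟩
  exact ⟨isFoata_pipeFoata_succ m, traceEquiv_flatten_pipeFoata_succ m, length_pipeFoata hn⟩
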